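/- arXiv:2502.16465 — 2 statements merged into one kernel-verified Lean document; each statement's English description precedes it below -/
import Mathlib

section
/- Let G be a finite connected simple graph with maximum degree d_M whose Lin–Lu–Yau Ricci curvature satisfies κ_LLY(x,y) ≥ κ_0 > 0 for every edge xy. Then the number of vertices n satisfies n ≤ 1 + ∑_{k=1}^{⌊2/κ_0⌋} d_M^k ∏_{i=1}^{k-1} (1 − i·κ_0/2). -/
/-!
Testing the transportation distance against the 1-Lipschitz function `d(x, ·)` gives
`κ_α(x, y) / (1 - α) ≤ 2 (1 - o / deg y) / d(x, y)`, where `o` counts the neighbours of `y` one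
step farther from `x`. This quotient is also nondecreasing in `α`, because for `γ ≤ β` the walk
`m_x^β` is a mixture of `m_x^γ` and the Dirac mass at `x`; so `κ_LLY` is a genuine limit and obeys
the same bound. Gluing couplings along a geodesic spreads the bound `κ₀` from edges to all pairs.
Hence `d(x, y) ≤ 2 / κ₀`, and every vertex at distance `k` from `x₀` has at most
`d_M (1 - k κ₀ / 2)` neighbours at distance `k + 1`; summing the sizes of the spheres around
`x₀` gives the bound.
-/

open Finset

/-- A probability measure on a finite set, given as a density. -/
def IsProbMeasure {V : Type*} [Fintype V] (m : V → ℝ) : Prop :=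
  (∀ x, 0 ≤ m x) ∧ ∑ x, m x = 1

/-- A coupling between two probability measures on a finite set. -/
def IsCoupling {V : Type*} [Fintype V] (A : V × V → ℝ) (m₁ m₂ : V → ℝ) : Prop :=
  (∀ p, 0 ≤ A p) ∧ (∀ x, ∑ y, A (x, y) = m₁ x) ∧ (∀ y, ∑ x, A (x, y) = m₂ y)

/-- The Wasserstein-1 (transportation) distance between two probability measures on a
finite set, with respect to a cost `d`. -/
noncomputable def W {V : Type*} [Fintype V] (d : V → V → ℝ) (m₁ m₂ : V → ℝ) : ℝ :=
  sInf {c | ∃ A, IsCoupling A m₁ m₂ ∧ c = ∑ p : V × V, A p * d p.1 p.2}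

lemma W_symm {V : Type*} [Fintype V] (d : V → V → ℝ) (hd : ∀ x y, d x y = d y x)
    (m₁ m₂ : V → ℝ) : W d m₁ m₂ = W d m₂ m₁ := by
  have key : ∀ m₁ m₂ : V → ℝ,
      {c | ∃ A, IsCoupling A m₁ m₂ ∧ c = ∑ p : V × V, A p * d p.1 p.2} ⊆
      {c | ∃ A, IsCoupling A m₂ m₁ ∧ c = ∑ p : V × V, A p * d p.1 p.2} := by
    rintro m₁ m₂ c ⟨A, ⟨h0, h1, h2⟩, rfl⟩
    refine ⟨fun p => A (p.2, p.1), ⟨fun p => h0 _, fun x => h2 x, fun y => h1 y⟩, ?_⟩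
    refine Fintype.sum_equiv (Equiv.prodComm V V) _ _ ?_
    intro p
    simp [Equiv.prodComm, hd p.1 p.2]
  unfold W
  congr 1
  exact Set.Subset.antisymm (key m₁ m₂) (key m₂ m₁)

/-- The `α`-lazy random walk measure at a vertex `x` of a graph. -/
noncomputable def lazyWalk {V : Type*} [Fintype V] [DecidableEq V] (G : SimpleGraph V)
    [DecidableRel G.Adj] (α : ℝ) (x : V) : V → ℝ :=
  fun v => if v = x then α else if G.Adj x v then (1 - α) / (G.degree x) else 0

/-- The `α`-Ricci curvature `κ_α(x,y) = 1 - W(m_x^α, m_y^α)/d(x,y)`. -/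
noncomputable def kappaAlpha {V : Type*} [Fintype V] [DecidableEq V] (G : SimpleGraph V)
    [DecidableRel G.Adj] (α : ℝ) (x y : V) : ℝ :=
  1 - W (fun a b => (G.dist a b : ℝ)) (lazyWalk G α x) (lazyWalk G α y) / (G.dist x y)

lemma kappaAlpha_symm {V : Type*} [Fintype V] [DecidableEq V] (G : SimpleGraph V)
    [DecidableRel G.Adj] (α : ℝ) (x y : V) :
    kappaAlpha G α x y = kappaAlpha G α y x := by
  unfold kappaAlpha
  rw [W_symm _ (fun a b => by rw [SimpleGraph.dist_comm]),
    SimpleGraph.dist_comm]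

/-- The Lin–Lu–Yau Ricci curvature `κ_LLY(x,y) = lim_{α → 1⁻} κ_α(x,y)/(1-α)`. -/
noncomputable def kappaLLY {V : Type*} [Fintype V] [DecidableEq V] (G : SimpleGraph V)
    [DecidableRel G.Adj] (x y : V) : ℝ :=
  Filter.limUnder (nhdsWithin 1 (Set.Ico (0:ℝ) 1)) (fun α => kappaAlpha G α x y / (1 - α))

lemma kappaLLY_symm {V : Type*} [Fintype V] [DecidableEq V] (G : SimpleGraph V)
    [DecidableRel G.Adj] (x y : V) : kappaLLY G x y = kappaLLY G y x := by
  unfold kappaLLY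
  congr 1
  funext α
  rw [kappaAlpha_symm]

/-- Integral `α`-Ricci curvature `I^α_{κ₀}`: total amount of `α`-Ricci curvature below the
threshold `(1-α)κ₀`, summed over the edges of `G`. -/
noncomputable def IAlpha {V : Type*} [Fintype V] [DecidableEq V] (G : SimpleGraph V)
    [DecidableRel G.Adj] (α κ₀ : ℝ) : ℝ :=
  ∑ e ∈ G.edgeFinset,
    Sym2.lift ⟨fun x y => max 0 ((1 - α) * κ₀ - kappaAlpha G α x y),
      fun x y => by simp only []; rw [kappaAlpha_symm]⟩ e

/-- Integral Lin–Lu–Yau Ricci curvature `I_{κ₀}`: total amount of Lin–Lu–Yau Ricci curvature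
below the threshold `κ₀`, summed over the edges of `G`. -/
noncomputable def ILLY {V : Type*} [Fintype V] [DecidableEq V] (G : SimpleGraph V)
    [DecidableRel G.Adj] (κ₀ : ℝ) : ℝ :=
  ∑ e ∈ G.edgeFinset,
    Sym2.lift ⟨fun x y => max 0 (κ₀ - kappaLLY G x y),
      fun x y => by simp only []; rw [kappaLLY_symm]⟩ e

/-- The diameter of a finite graph. -/
noncomputable def gDiam {V : Type*} [Fintype V] (G : SimpleGraph V) : ℕ :=
  Finset.univ.sup fun p : V × V => G.dist p.1 p.2

section Wasserstein

variable {V : Type*} [Fintype V] {d : V → V → ℝ} {m₁ m₂ m₃ : V → ℝ} {A B : V × V → ℝ}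

def transportCost (d : V → V → ℝ) (A : V × V → ℝ) : ℝ :=
  ∑ p : V × V, A p * d p.1 p.2

lemma IsProbMeasure.isCoupling_mul (h₁ : IsProbMeasure m₁) (h₂ : IsProbMeasure m₂) :
    IsCoupling (fun p => m₁ p.1 * m₂ p.2) m₁ m₂ :=
  ⟨fun p => mul_nonneg (h₁.1 _) (h₂.1 _),
    fun x => by dsimp only; rw [← mul_sum, h₂.2, mul_one],
    fun y => by dsimp only; rw [← sum_mul, h₁.2, one_mul]⟩

lemma W_le_transportCost (hd : ∀ a b, 0 ≤ d a b) (hA : IsCoupling A m₁ m₂) :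
    W d m₁ m₂ ≤ transportCost d A := by
  refine csInf_le ⟨0, ?_⟩ ⟨A, hA, rfl⟩
  rintro _ ⟨B, hB, rfl⟩
  exact sum_nonneg fun p _ => mul_nonneg (hB.1 p) (hd _ _)

lemma le_W (h₁ : IsProbMeasure m₁) (h₂ : IsProbMeasure m₂) {c : ℝ}
    (h : ∀ A, IsCoupling A m₁ m₂ → c ≤ transportCost d A) : c ≤ W d m₁ m₂ := by
  refine le_csInf ⟨_, _, h₁.isCoupling_mul h₂, rfl⟩ ?_
  rintro _ ⟨A, hA, rfl⟩
  exact h A hA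

lemma IsCoupling.sum_mul_fst (hA : IsCoupling A m₁ m₂) (f : V → ℝ) :
    ∑ p : V × V, A p * f p.1 = ∑ v, m₁ v * f v := by
  rw [Fintype.sum_prod_type]
  exact sum_congr rfl fun x _ => by dsimp only; rw [← sum_mul, hA.2.1]

lemma IsCoupling.sum_mul_snd (hA : IsCoupling A m₁ m₂) (f : V → ℝ) :
    ∑ p : V × V, A p * f p.2 = ∑ v, m₂ v * f v := by
  rw [Fintype.sum_prod_type, sum_comm]
  exact sum_congr rfl fun y _ => by dsimp only; rw [← sum_mul, hA.2.2]

lemma sub_le_W (h₁ : IsProbMeasure m₁) (h₂ : IsProbMeasure m₂) {f : V → ℝ}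
    (hf : ∀ a b, f b - f a ≤ d a b) :
    ∑ v, m₂ v * f v - ∑ v, m₁ v * f v ≤ W d m₁ m₂ := by
  refine le_W h₁ h₂ fun A hA => ?_
  rw [← hA.sum_mul_fst, ← hA.sum_mul_snd, ← sum_sub_distrib]
  exact sum_le_sum fun p _ => by rw [← mul_sub]; exact mul_le_mul_of_nonneg_left (hf _ _) (hA.1 p)

lemma W_self_nonpos [DecidableEq V] (hd : ∀ a b, 0 ≤ d a b) (hd₀ : ∀ a, d a a = 0)
    (hm : ∀ v, 0 ≤ m₁ v) : W d m₁ m₁ ≤ 0 := by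
  have hA : IsCoupling (fun p => if p.1 = p.2 then m₁ p.1 else 0) m₁ m₁ :=
    ⟨fun p => by dsimp only; split_ifs; exacts [hm _, le_rfl], fun x => by simp,
      fun y => by simp [eq_comm]⟩
  refine (W_le_transportCost hd hA).trans (sum_nonpos fun p _ => ?_)
  dsimp only
  split_ifs with h <;> simp [h, hd₀]

lemma IsCoupling.eq_zero_of_snd (hA : IsCoupling A m₁ m₂) {y : V} (hy : m₂ y = 0) (x : V) :
    A (x, y) = 0 := by
  rw [← hA.2.2 y, sum_eq_zero_iff_of_nonneg fun i _ => hA.1 (i, y)] at hy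
  exact hy x (mem_univ x)

lemma IsCoupling.eq_zero_of_fst (hA : IsCoupling A m₁ m₂) {x : V} (hx : m₁ x = 0) (y : V) :
    A (x, y) = 0 := by
  rw [← hA.2.1 x, sum_eq_zero_iff_of_nonneg fun i _ => hA.1 (x, i)] at hx
  exact hx y (mem_univ y)

/-- Where `m₂` vanishes so do both couplings, so the junk value of division by zero is
harmless. -/
noncomputable def glue (A B : V × V → ℝ) (m₂ : V → ℝ) (x y z : V) : ℝ :=
  A (x, y) * B (y, z) / m₂ y

lemma sum_glue_right (hA : IsCoupling A m₁ m₂) (hB : IsCoupling B m₂ m₃) (x y : V) :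
    ∑ z, glue A B m₂ x y z = A (x, y) := by
  by_cases hy : m₂ y = 0
  · simp [glue, hy, hA.eq_zero_of_snd hy]
  · simp only [glue, ← sum_div, ← mul_sum, hB.2.1, mul_div_cancel_right₀ _ hy]

lemma sum_glue_left (hA : IsCoupling A m₁ m₂) (hB : IsCoupling B m₂ m₃) (y z : V) :
    ∑ x, glue A B m₂ x y z = B (y, z) := by
  by_cases hy : m₂ y = 0
  · simp [glue, hy, hB.eq_zero_of_fst hy]
  · simp only [glue, ← sum_div, ← sum_mul, hA.2.2, mul_div_cancel_left₀ _ hy]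

lemma glue_nonneg (hA : IsCoupling A m₁ m₂) (hB : IsCoupling B m₂ m₃) (x y z : V) :
    0 ≤ glue A B m₂ x y z := by
  have hm : 0 ≤ m₂ y := hA.2.2 y ▸ sum_nonneg fun i _ => hA.1 (i, y)
  exact div_nonneg (mul_nonneg (hA.1 _) (hB.1 _)) hm

lemma IsCoupling.glue (hA : IsCoupling A m₁ m₂) (hB : IsCoupling B m₂ m₃) :
    IsCoupling (fun p => ∑ y, glue A B m₂ p.1 y p.2) m₁ m₃ := by
  refine ⟨fun p => sum_nonneg fun y _ => glue_nonneg hA hB _ _ _, fun x => ?_, fun z => ?_⟩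
  · rw [sum_comm]
    simp only [sum_glue_right hA hB, hA.2.1]
  · rw [sum_comm]
    simp only [sum_glue_left hA hB, hB.2.2]

lemma transportCost_glue_le (hA : IsCoupling A m₁ m₂) (hB : IsCoupling B m₂ m₃)
    (htri : ∀ a b c, d a c ≤ d a b + d b c) :
    transportCost d (fun p => ∑ y, glue A B m₂ p.1 y p.2) ≤
      transportCost d A + transportCost d B := by
  have hA' : transportCost d A = ∑ x, ∑ y, ∑ z, glue A B m₂ x y z * d x y := by
    simp only [transportCost, Fintype.sum_prod_type, ← sum_mul, sum_glue_right hA hB]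
  have hB' : transportCost d B = ∑ x, ∑ y, ∑ z, glue A B m₂ x y z * d y z := by
    rw [sum_comm]
    refine (Fintype.sum_prod_type _).trans (sum_congr rfl fun y _ => ?_)
    rw [sum_comm]
    simp only [← sum_mul, sum_glue_left hA hB]
  rw [hA', hB', ← sum_add_distrib]
  simp only [transportCost, Fintype.sum_prod_type, sum_mul]
  refine sum_le_sum fun x _ => ?_
  rw [sum_comm, ← sum_add_distrib]
  refine sum_le_sum fun y _ => ?_
  rw [← sum_add_distrib]
  refine sum_le_sum fun z _ => ?_
  rw [← mul_add]
  exact mul_le_mul_of_nonneg_left (htri x y z) (glue_nonneg hA hB x y z)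

theorem W_triangle (hd : ∀ a b, 0 ≤ d a b) (htri : ∀ a b c, d a c ≤ d a b + d b c)
    (h₁ : IsProbMeasure m₁) (h₂ : IsProbMeasure m₂) (h₃ : IsProbMeasure m₃) :
    W d m₁ m₃ ≤ W d m₁ m₂ + W d m₂ m₃ := by
  have hglue : ∀ A B, IsCoupling A m₁ m₂ → IsCoupling B m₂ m₃ →
      W d m₁ m₃ ≤ transportCost d A + transportCost d B := fun A B hA hB =>
    (W_le_transportCost hd (hA.glue hB)).trans (transportCost_glue_le hA hB htri)
  have hB : ∀ B, IsCoupling B m₂ m₃ → W d m₁ m₃ - transportCost d B ≤ W d m₁ m₂ :=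
    fun B hB => le_W h₁ h₂ fun A hA => by linarith [hglue A B hA hB]
  have : W d m₁ m₃ - W d m₁ m₂ ≤ W d m₂ m₃ :=
    le_W h₂ h₃ fun B hB' => by linarith [hB B hB']
  linarith

theorem W_mix_dirac_le [DecidableEq V] (hd : ∀ a b, 0 ≤ d a b) (h₁ : IsProbMeasure m₁)
    (h₂ : IsProbMeasure m₂) {t : ℝ} (ht₀ : 0 < t) (ht₁ : t ≤ 1) (x y : V) :
    W d (fun v => t * m₁ v + (1 - t) * if v = x then 1 else 0)
        (fun v => t * m₂ v + (1 - t) * if v = y then 1 else 0) ≤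
      t * W d m₁ m₂ + (1 - t) * d x y := by
  have hmix : ∀ A, IsCoupling A m₁ m₂ →
      IsCoupling (fun p => t * A p + (1 - t) * if p = (x, y) then 1 else 0)
        (fun v => t * m₁ v + (1 - t) * if v = x then 1 else 0)
        (fun v => t * m₂ v + (1 - t) * if v = y then 1 else 0) := by
    intro A hA
    refine ⟨fun p => ?_, fun v => ?_, fun w => ?_⟩
    · have : (0 : ℝ) ≤ if p = (x, y) then 1 else 0 := by split_ifs <;> norm_num
      exact add_nonneg (mul_nonneg ht₀.le (hA.1 p)) (mul_nonneg (by linarith) this)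
    · simp [sum_add_distrib, ← mul_sum, hA.2.1, Prod.ext_iff, ite_and]
    · simp [sum_add_distrib, ← mul_sum, hA.2.2, Prod.ext_iff, ite_and]
  have hcost : ∀ A, transportCost d (fun p => t * A p + (1 - t) * if p = (x, y) then 1 else 0) =
      t * transportCost d A + (1 - t) * d x y := by
    intro A
    simp [transportCost, add_mul, sum_add_distrib, mul_sum, mul_assoc]
  have : (W d (fun v => t * m₁ v + (1 - t) * if v = x then 1 else 0)
      (fun v => t * m₂ v + (1 - t) * if v = y then 1 else 0) - (1 - t) * d x y) / t ≤
      W d m₁ m₂ := by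
    refine le_W h₁ h₂ fun A hA => ?_
    rw [div_le_iff₀ ht₀]
    linarith [W_le_transportCost hd (hmix A hA), hcost A]
  rw [div_le_iff₀ ht₀] at this
  linarith

end Wasserstein

section LazyWalk

variable {V : Type*} [Fintype V] [DecidableEq V] {G : SimpleGraph V} [DecidableRel G.Adj]
  {α : ℝ}

lemma lazyWalk_nonneg (h₀ : 0 ≤ α) (h₁ : α ≤ 1) (x v : V) : 0 ≤ lazyWalk G α x v := by
  unfold lazyWalk
  split_ifs
  exacts [h₀, div_nonneg (by linarith) (Nat.cast_nonneg _), le_rfl]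

lemma sum_lazyWalk_mul (α : ℝ) (x : V) (f : V → ℝ) :
    ∑ v, lazyWalk G α x v * f v =
      α * f x + (1 - α) / G.degree x * ∑ z ∈ G.neighborFinset x, f z := by
  have hsplit : ∀ v, lazyWalk G α x v * f v =
      (if v = x then α * f v else 0) + if G.Adj x v then (1 - α) / G.degree x * f v else 0 := by
    intro v
    unfold lazyWalk
    by_cases hv : v = x
    · simp [hv]
    · simp [hv]
  simp only [hsplit, sum_add_distrib, sum_ite_eq', mem_univ, if_true, ← sum_filter,
    ← SimpleGraph.neighborFinset_eq_filter, mul_sum]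

lemma isProbMeasure_lazyWalk (h₀ : 0 ≤ α) (h₁ : α ≤ 1) {x : V} (hx : 0 < G.degree x) :
    IsProbMeasure (lazyWalk G α x) := by
  refine ⟨lazyWalk_nonneg h₀ h₁ x, ?_⟩
  have hx' : (G.degree x : ℝ) ≠ 0 := by exact_mod_cast hx.ne'
  simpa [hx'] using sum_lazyWalk_mul (G := G) α x fun _ => 1

lemma lazyWalk_eq_mix {γ β t : ℝ} (ht : t * (1 - γ) = 1 - β) (x : V) :
    lazyWalk G β x = fun v => t * lazyWalk G γ x v + (1 - t) * if v = x then 1 else 0 := by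
  funext v
  unfold lazyWalk
  split_ifs
  · linarith
  · rw [mul_zero, add_zero, ← mul_div_assoc, ht]
  · ring

end LazyWalk

namespace SimpleGraph

variable {V : Type*} {G : SimpleGraph V} {x y : V}

lemma Connected.exists_adj_dist_eq (hG : G.Connected) {z : V} {k : ℕ}
    (hz : G.dist x z = k + 1) : ∃ y, G.Adj y z ∧ G.dist x y = k := by
  obtain ⟨q, hq⟩ := hG.exists_walk_length_eq_dist z x
  cases q with
  | nil => simp at hz
  | @cons _ y _ hzy q =>
    refine ⟨y, hzy.symm, le_antisymm ?_ ?_⟩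
    · have := dist_le q
      rw [Walk.length_cons, dist_comm, hz] at hq
      rw [dist_comm]
      omega
    · have := hzy.symm.reachable.dist_triangle_right x
      rw [dist_eq_one_iff_adj.2 hzy.symm] at this
      omega

variable [Fintype V]

lemma Connected.degree_pos_of_ne [DecidableRel G.Adj] (hG : G.Connected) (hxy : x ≠ y)
    (v : V) : 0 < G.degree v :=
  have : Nontrivial V := ⟨x, y, hxy⟩
  hG.preconnected.degree_pos_of_nontrivial v

noncomputable def sphere (G : SimpleGraph V) (x : V) (k : ℕ) : Finset V :=
  univ.filter fun y => G.dist x y = k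

@[simp] lemma mem_sphere {k : ℕ} : y ∈ G.sphere x k ↔ G.dist x y = k := by
  simp [sphere]

lemma sphere_zero (hG : G.Connected) (x : V) : G.sphere x 0 = {x} := by
  ext y
  simp [hG.dist_eq_zero_iff, eq_comm]

lemma sphere_one [DecidableRel G.Adj] (x : V) : G.sphere x 1 = G.neighborFinset x := by
  ext y
  simp

lemma Connected.card_eq_one_add_sum_card_sphere (hG : G.Connected) (x : V) {K : ℕ}
    (hK : ∀ y, G.dist x y ≤ K) : Fintype.card V = 1 + ∑ k ∈ Icc 1 K, #(G.sphere x k) := by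
  have h := card_eq_sum_card_fiberwise (s := univ) (t := range (K + 1)) (f := G.dist x)
    fun y _ => mem_range.2 (Nat.lt_succ_of_le (hK y))
  rw [card_univ, Nat.range_succ_eq_Icc_zero, ← insert_Icc_add_one_left_eq_Icc K.zero_le,
    sum_insert (by simp)] at h
  rw [h]
  congr 1
  exact (congrArg card (sphere_zero hG x)).trans (card_singleton x)

noncomputable def outNeighborFinset (G : SimpleGraph V) [DecidableRel G.Adj] (x y : V) :
    Finset V :=
  (G.neighborFinset y).filter fun z => G.dist x z = G.dist x y + 1

@[simp] lemma mem_outNeighborFinset [DecidableRel G.Adj] {z : V} :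
    z ∈ G.outNeighborFinset x y ↔ G.Adj y z ∧ G.dist x z = G.dist x y + 1 := by
  simp [outNeighborFinset]

lemma sum_dist_neighborFinset_ge [DecidableRel G.Adj] (x y : V) :
    ((G.dist x y : ℝ) - 1) * G.degree y + 2 * #(G.outNeighborFinset x y) ≤
      ∑ z ∈ G.neighborFinset y, (G.dist x z : ℝ) := by
  have hpt : ∀ z ∈ G.neighborFinset y,
      ((G.dist x y : ℝ) - 1) + 2 * (if G.dist x z = G.dist x y + 1 then 1 else 0) ≤
        G.dist x z := by
    intro z hz
    have hyz : G.Adj y z := (mem_neighborFinset _ _ _).1 hz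
    have h₁ := hyz.symm.reachable.dist_triangle_right x
    rw [dist_eq_one_iff_adj.2 hyz.symm] at h₁
    split_ifs with hfar
    · rw [hfar]
      push_cast
      linarith
    · have : (G.dist x y : ℝ) ≤ G.dist x z + 1 := by exact_mod_cast h₁
      linarith
  refine le_of_eq_of_le ?_ (sum_le_sum hpt)
  rw [sum_add_distrib, sum_const, ← mul_sum, sum_boole, card_neighborFinset_eq_degree,
    nsmul_eq_mul, mul_comm, outNeighborFinset]

end SimpleGraph

open SimpleGraph Filter Topology

instance : (𝓝[Set.Ico (0 : ℝ) 1] 1).NeBot := right_nhdsWithin_Ico_neBot zero_lt_one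

section Curvature

variable {V : Type*} [Fintype V] [DecidableEq V] {G : SimpleGraph V} [DecidableRel G.Adj]
  {α : ℝ} {x y : V}

noncomputable def lazyWalkW (G : SimpleGraph V) [DecidableRel G.Adj] (α : ℝ) (x y : V) : ℝ :=
  W (fun a b => (G.dist a b : ℝ)) (lazyWalk G α x) (lazyWalk G α y)

lemma kappaAlpha_div_eq (hxy : 0 < G.dist x y) (α : ℝ) :
    kappaAlpha G α x y / (1 - α) =
      (G.dist x y - lazyWalkW G α x y) / (G.dist x y * (1 - α)) := by
  have : (G.dist x y : ℝ) ≠ 0 := by positivity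
  rw [kappaAlpha, ← lazyWalkW, one_sub_div this, div_div]

lemma monotoneOn_kappaAlpha_div (hx : 0 < G.degree x) (hy : 0 < G.degree y)
    (hxy : 0 < G.dist x y) :
    MonotoneOn (fun α => kappaAlpha G α x y / (1 - α)) (Set.Ico 0 1) := by
  intro γ ⟨hγ₀, hγ₁⟩ β ⟨hβ₀, hβ₁⟩ hγβ
  set t := (1 - β) / (1 - γ)
  have ht : t * (1 - γ) = 1 - β := div_mul_cancel₀ _ (by linarith)
  have ht₀ : 0 < t := div_pos (by linarith) (by linarith)
  have hmix : lazyWalkW G β x y ≤ t * lazyWalkW G γ x y + (1 - t) * G.dist x y := by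
    rw [lazyWalkW, lazyWalk_eq_mix ht x, lazyWalk_eq_mix ht y]
    exact W_mix_dirac_le (fun a b => Nat.cast_nonneg _)
      (isProbMeasure_lazyWalk hγ₀ hγ₁.le hx) (isProbMeasure_lazyWalk hγ₀ hγ₁.le hy) ht₀
      ((div_le_one (by linarith)).2 (by linarith)) x y
  have hk : (0 : ℝ) < G.dist x y := by exact_mod_cast hxy
  simp only [kappaAlpha_div_eq hxy]
  rw [div_le_div_iff₀ (by nlinarith) (by nlinarith), ← ht]
  nlinarith [mul_le_mul_of_nonneg_left hmix (by nlinarith : (0:ℝ) ≤ (1 - γ) * G.dist x y)]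

/-- Test function `dist x ·`: the neighbours of `y` lie at distance at least `d(x, y) - 1` from `x`,
and its out-neighbours at distance `d(x, y) + 1`. -/
lemma kappaAlpha_div_le (hG : G.Connected) (hx : 0 < G.degree x) (hy : 0 < G.degree y)
    (hxy : 0 < G.dist x y) (hα : α ∈ Set.Ico 0 1) :
    kappaAlpha G α x y / (1 - α) ≤
      2 * (1 - #(G.outNeighborFinset x y) / G.degree y) / G.dist x y := by
  obtain ⟨hα₀, hα₁⟩ := hα
  have hdx : (0 : ℝ) < G.degree x := by exact_mod_cast hx
  have hdy : (0 : ℝ) < G.degree y := by exact_mod_cast hy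
  have hk : (0 : ℝ) < G.dist x y := by exact_mod_cast hxy
  have hLip : ∀ a b, (G.dist x b : ℝ) - G.dist x a ≤ G.dist a b := fun a b => by
    have : (G.dist x b : ℝ) ≤ G.dist x a + G.dist a b := by exact_mod_cast hG.dist_triangle
    linarith
  have hKR := sub_le_W (isProbMeasure_lazyWalk hα₀ hα₁.le hx)
    (isProbMeasure_lazyWalk hα₀ hα₁.le hy) hLip
  have hnx : ∑ z ∈ G.neighborFinset x, (G.dist x z : ℝ) = G.degree x := by
    rw [← card_neighborFinset_eq_degree, card_eq_sum_ones, Nat.cast_sum]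
    exact sum_congr rfl fun z hz => by
      simp [dist_eq_one_iff_adj.2 ((mem_neighborFinset _ _ _).1 hz)]
  rw [sum_lazyWalk_mul, sum_lazyWalk_mul, hnx, dist_self, Nat.cast_zero, mul_zero, zero_add,
    div_mul_cancel₀ _ hdx.ne'] at hKR
  set o : ℝ := ((G.outNeighborFinset x y).card : ℝ)
  have hny : (1 - α) * (G.dist x y - 1) + 2 * (1 - α) * (o / G.degree y) ≤
      (1 - α) / G.degree y * ∑ z ∈ G.neighborFinset y, (G.dist x z : ℝ) := by
    calc _ = (1 - α) / G.degree y * ((G.dist x y - 1) * G.degree y + 2 * o) := by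
          field_simp
      _ ≤ _ := mul_le_mul_of_nonneg_left (sum_dist_neighborFinset_ge x y)
          (div_nonneg (by linarith) hdy.le)
  have hW : (G.dist x y : ℝ) - 2 * (1 - α) * (1 - o / G.degree y) ≤ lazyWalkW G α x y := by
    rw [lazyWalkW]
    linarith
  rw [kappaAlpha_div_eq hxy, div_le_div_iff₀ (by nlinarith) hk]
  nlinarith [mul_le_mul_of_nonneg_right hW hk.le]

/-- `kappaLLY` is a `limUnder`; the limit exists because `κ_α / (1 - α)` is monotone and
bounded. -/
theorem tendsto_kappaLLY (hG : G.Connected) (hx : 0 < G.degree x) (hy : 0 < G.degree y)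
    (hxy : 0 < G.dist x y) :
    Tendsto (fun α => kappaAlpha G α x y / (1 - α)) (𝓝[Set.Ico 0 1] 1)
      (𝓝 (kappaLLY G x y)) := by
  have hbdd : BddAbove ((fun α => kappaAlpha G α x y / (1 - α)) '' Set.Ioo 0 1) :=
    ⟨_, Set.forall_mem_image.2 fun _ hα =>
      kappaAlpha_div_le hG hx hy hxy (Set.Ioo_subset_Ico_self hα)⟩
  have hlim := ((monotoneOn_kappaAlpha_div hx hy hxy).mono Set.Ioo_subset_Ico_self
    |>.tendsto_nhdsWithin_Ioo_left ⟨1 / 2, by norm_num, by norm_num⟩ hbdd).mono_left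
    (nhdsWithin_mono _ fun _ hα => hα.2 : 𝓝[Set.Ico (0 : ℝ) 1] 1 ≤ 𝓝[<] 1)
  rwa [kappaLLY, hlim.limUnder_eq]

theorem kappaLLY_le (hG : G.Connected) (hx : 0 < G.degree x) (hy : 0 < G.degree y)
    (hxy : 0 < G.dist x y) :
    kappaLLY G x y ≤ 2 * (1 - #(G.outNeighborFinset x y) / G.degree y) / G.dist x y :=
  le_of_tendsto (tendsto_kappaLLY hG hx hy hxy)
    (eventually_nhdsWithin_of_forall fun _ hα => kappaAlpha_div_le hG hx hy hxy hα)

lemma lazyWalkW_le_of_walk (hG : G.Connected) (hdeg : ∀ v, 0 < G.degree v) (h₀ : 0 ≤ α)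
    (h₁ : α ≤ 1) {c : ℝ} (hc : ∀ u v, G.Adj u v → lazyWalkW G α u v ≤ c) {a b : V}
    (p : G.Walk a b) : lazyWalkW G α a b ≤ p.length * c := by
  induction p with
  | nil =>
    simpa [lazyWalkW] using W_self_nonpos (fun a b => Nat.cast_nonneg _) (fun a => by simp)
      (lazyWalk_nonneg h₀ h₁ _)
  | @cons u v w huv q ih =>
    calc lazyWalkW G α u w ≤ lazyWalkW G α u v + lazyWalkW G α v w :=
          W_triangle (fun a b => Nat.cast_nonneg _)
            (fun a b c => by exact_mod_cast hG.dist_triangle)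
            (isProbMeasure_lazyWalk h₀ h₁ (hdeg u)) (isProbMeasure_lazyWalk h₀ h₁ (hdeg v))
            (isProbMeasure_lazyWalk h₀ h₁ (hdeg w))
      _ ≤ c + q.length * c := add_le_add (hc u v huv) ih
      _ = (q.cons huv).length * c := by push_cast [Walk.length_cons]; ring

/-- Transportation costs add up along a geodesic. -/
lemma le_kappaAlpha_div_of_adj (hG : G.Connected) (hdeg : ∀ v, 0 < G.degree v)
    (hα : α ∈ Set.Ico 0 1) {c : ℝ} (hc : ∀ u v, G.Adj u v → c ≤ kappaAlpha G α u v / (1 - α))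
    (hxy : x ≠ y) : c ≤ kappaAlpha G α x y / (1 - α) := by
  obtain ⟨hα₀, hα₁⟩ := hα
  have h1α : 0 < 1 - α := by linarith
  have hedge : ∀ u v, G.Adj u v → lazyWalkW G α u v ≤ 1 - c * (1 - α) := by
    intro u v huv
    have h := hc u v huv
    rw [kappaAlpha_div_eq (hG.pos_dist_of_ne huv.ne), dist_eq_one_iff_adj.2 huv, Nat.cast_one,
      one_mul, le_div_iff₀ h1α] at h
    linarith
  obtain ⟨p, hp⟩ := hG.exists_walk_length_eq_dist x y
  have hW := lazyWalkW_le_of_walk hG hdeg hα₀ hα₁.le hedge p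
  have hk : (0 : ℝ) < G.dist x y := by exact_mod_cast hG.pos_dist_of_ne hxy
  rw [hp] at hW
  rw [kappaAlpha_div_eq (hG.pos_dist_of_ne hxy), le_div_iff₀ (by positivity)]
  nlinarith

theorem le_kappaLLY_of_adj (hG : G.Connected) (hdeg : ∀ v, 0 < G.degree v) {κ₀ : ℝ}
    (hcurv : ∀ u v, G.Adj u v → κ₀ ≤ kappaLLY G u v) (hxy : x ≠ y) : κ₀ ≤ kappaLLY G x y := by
  refine le_of_forall_lt_imp_le_of_dense fun c hc => ?_
  have hev : ∀ᶠ α in 𝓝[Set.Ico 0 1] 1,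
      α ∈ Set.Ico 0 1 ∧ ∀ u v, G.Adj u v → c ≤ kappaAlpha G α u v / (1 - α) := by
    refine eventually_mem_nhdsWithin.and (eventually_all.2 fun u => eventually_all.2 fun v => ?_)
    by_cases huv : G.Adj u v
    · have hlim := tendsto_kappaLLY hG (hdeg u) (hdeg v) (hG.pos_dist_of_ne huv.ne)
      exact (hlim.eventually_const_le (hc.trans_le (hcurv u v huv))).mono fun _ h _ => h
    · exact Eventually.of_forall fun _ h => absurd h huv
  exact ge_of_tendsto (tendsto_kappaLLY hG (hdeg x) (hdeg y) (hG.pos_dist_of_ne hxy))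
    (hev.mono fun _ h => le_kappaAlpha_div_of_adj hG hdeg h.1 h.2 hxy)

end Curvature

section Moore

variable {V : Type*} [Fintype V] [DecidableEq V] {G : SimpleGraph V} [DecidableRel G.Adj]
  {κ₀ : ℝ} {x y : V}

theorem card_outNeighborFinset_le (hG : G.Connected)
    (hcurv : ∀ u v, G.Adj u v → κ₀ ≤ kappaLLY G u v) (hxy : x ≠ y) :
    (#(G.outNeighborFinset x y) : ℝ) ≤ G.degree y * (1 - G.dist x y * κ₀ / 2) := by
  have hdeg := hG.degree_pos_of_ne hxy
  have hk : (0 : ℝ) < G.dist x y := by exact_mod_cast hG.pos_dist_of_ne hxy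
  have hdy : (0 : ℝ) < G.degree y := by exact_mod_cast hdeg y
  have h := (le_kappaLLY_of_adj hG hdeg hcurv hxy).trans
    (kappaLLY_le hG (hdeg x) (hdeg y) (hG.pos_dist_of_ne hxy))
  rw [le_div_iff₀ hk] at h
  rw [← div_le_iff₀' hdy]
  linarith

/-- Discrete Bonnet–Myers theorem. -/
theorem dist_mul_le_two (hG : G.Connected) (hcurv : ∀ u v, G.Adj u v → κ₀ ≤ kappaLLY G u v)
    (x y : V) : (G.dist x y : ℝ) * κ₀ ≤ 2 := by
  obtain rfl | hxy := eq_or_ne x y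
  · simp
  have h := (Nat.cast_nonneg _).trans (card_outNeighborFinset_le hG hcurv hxy)
  have hdy : (0 : ℝ) < G.degree y := by exact_mod_cast hG.degree_pos_of_ne hxy y
  nlinarith

lemma card_sphere_succ_le (hG : G.Connected) (x : V) (k : ℕ) :
    #(G.sphere x (k + 1)) ≤ ∑ y ∈ G.sphere x k, #(G.outNeighborFinset x y) := by
  refine (card_le_card fun z hz => ?_).trans card_biUnion_le
  obtain ⟨y, hyz, hy⟩ := hG.exists_adj_dist_eq (mem_sphere.1 hz)
  exact mem_biUnion.2 ⟨y, mem_sphere.2 hy, mem_outNeighborFinset.2 ⟨hyz, hy ▸ mem_sphere.1 hz⟩⟩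

theorem card_sphere_succ_le_prod (hG : G.Connected)
    (hcurv : ∀ u v, G.Adj u v → κ₀ ≤ kappaLLY G u v) {D : ℕ} (hD : ∀ v, G.degree v ≤ D)
    (x : V) {j : ℕ} (hj : (j : ℝ) * κ₀ ≤ 2) :
    (#(G.sphere x (j + 1)) : ℝ) ≤ D ^ (j + 1) * ∏ i ∈ Icc 1 j, (1 - i * κ₀ / 2) := by
  induction j with
  | zero => simpa [sphere_one] using hD x
  | succ j ih =>
    push_cast at hj
    have hfac : 0 ≤ 1 - (j + 1 : ℝ) * κ₀ / 2 := by linarith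
    have hout : ∀ y ∈ G.sphere x (j + 1),
        (#(G.outNeighborFinset x y) : ℝ) ≤ D * (1 - (j + 1 : ℝ) * κ₀ / 2) := by
      intro y hy
      rw [mem_sphere] at hy
      have hxy : x ≠ y := by rintro rfl; simp at hy
      have h := card_outNeighborFinset_le hG hcurv hxy
      rw [hy, Nat.cast_add, Nat.cast_one] at h
      exact h.trans (mul_le_mul_of_nonneg_right (by exact_mod_cast hD y) hfac)
    calc (#(G.sphere x (j + 1 + 1)) : ℝ)
        ≤ ∑ y ∈ G.sphere x (j + 1), (#(G.outNeighborFinset x y) : ℝ) := by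
          exact_mod_cast card_sphere_succ_le hG x (j + 1)
      _ ≤ #(G.sphere x (j + 1)) * (D * (1 - (j + 1 : ℝ) * κ₀ / 2)) := by
          simpa using sum_le_sum hout
      _ ≤ D ^ (j + 1) * (∏ i ∈ Icc 1 j, (1 - i * κ₀ / 2)) *
            (D * (1 - (j + 1 : ℝ) * κ₀ / 2)) :=
          mul_le_mul_of_nonneg_right (ih (by rcases le_total 0 κ₀ with h | h <;> nlinarith))
            (mul_nonneg (Nat.cast_nonneg _) hfac)
      _ = D ^ (j + 1 + 1) * ∏ i ∈ Icc 1 (j + 1), (1 - i * κ₀ / 2) := by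
          rw [prod_Icc_succ_top (by omega), pow_succ]
          push_cast
          ring

end Moore

/-- Lin–Lu–Yau Moore-type bound (Theorem 4.3) for positively curved graphs. -/
theorem stmt_11 {V : Type*} [Fintype V] [DecidableEq V] (G : SimpleGraph V)
    [DecidableRel G.Adj] (hG : G.Connected) (κ₀ : ℝ) (hκ : 0 < κ₀)
    (hcurv : ∀ x y, G.Adj x y → κ₀ ≤ kappaLLY G x y) :
    (Fintype.card V : ℝ) ≤
      1 + ∑ k ∈ Finset.Icc 1 (⌊2 / κ₀⌋.toNat),
        (((Finset.univ.sup fun v => G.degree v) : ℕ) : ℝ) ^ k *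
          ∏ i ∈ Finset.Icc 1 (k - 1), (1 - (i : ℝ) * κ₀ / 2) := by
  obtain ⟨x₀⟩ := hG.nonempty
  have hK : ∀ k : ℕ, k ≤ ⌊2 / κ₀⌋.toNat ↔ (k : ℝ) * κ₀ ≤ 2 := fun k => by
    rw [Int.floor_toNat, Nat.le_floor_iff (by positivity), le_div_iff₀ hκ]
  rw [hG.card_eq_one_add_sum_card_sphere x₀ fun y => (hK _).2 (dist_mul_le_two hG hcurv x₀ y),
    Nat.cast_add, Nat.cast_one, Nat.cast_sum, add_le_add_iff_left]
  refine sum_le_sum fun k hk => ?_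
  obtain ⟨j, rfl⟩ : ∃ j, k = j + 1 := Nat.exists_eq_add_one.2 (mem_Icc.1 hk).1
  rw [Nat.add_sub_cancel]
  exact card_sphere_succ_le_prod hG hcurv
    (fun v => le_sup (f := fun v => G.degree v) (mem_univ v)) x₀ ((hK j).1 (by grind))
end

section
/- For the complete graph K_m with m ≥ 2 vertices, the Lin–Lu–Yau Ricci curvature of every edge equals m/(m−1). -/
/-!
On `K_n` the walks `m_x^α` and `m_y^α` agree except at `x` and `y`, where the masses `α` and
`b = (1 - α)/(n - 1)` are swapped. For `α ≥ 1/n` the surplus `α - b` sits at `x`, and moving it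
to `y` while keeping everything else in place costs `α - b`; the indicator of `x` is
1-Lipschitz and shows that no coupling does better. Hence `κ_α(x, y) = (1 - α) n/(n - 1)`, so
`κ_α/(1 - α)` is constant near `1`.
-/

open Finset

open Topology

section Transport

variable {V : Type*} [Fintype V] {d : V → V → ℝ} {m₁ m₂ : V → ℝ} {A : V × V → ℝ}

lemma IsCoupling.sum_potential_sub_le_cost (hA : IsCoupling A m₁ m₂) {f : V → ℝ}
    (hf : ∀ a b, f a - f b ≤ d a b) :
    ∑ v, f v * m₁ v - ∑ v, f v * m₂ v ≤ ∑ p : V × V, A p * d p.1 p.2 := by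
  obtain ⟨hA0, hA1, hA2⟩ := hA
  have h₁ : ∑ p : V × V, A p * f p.1 = ∑ v, f v * m₁ v := by
    rw [Fintype.sum_prod_type]; simp_rw [← sum_mul, hA1, mul_comm]
  have h₂ : ∑ p : V × V, A p * f p.2 = ∑ v, f v * m₂ v := by
    rw [Fintype.sum_prod_type_right]; simp_rw [← sum_mul, hA2, mul_comm]
  have hgap : ∑ v, f v * m₁ v - ∑ v, f v * m₂ v = ∑ p : V × V, A p * (f p.1 - f p.2) := by
    simp_rw [mul_sub, sum_sub_distrib, h₁, h₂]
  rw [hgap]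
  exact sum_le_sum fun p _ => mul_le_mul_of_nonneg_left (hf p.1 p.2) (hA0 p)

/-- The easy half of Kantorovich duality. -/
lemma W_eq_of_coupling_of_potential (hA : IsCoupling A m₁ m₂) {f : V → ℝ}
    (hf : ∀ a b, f a - f b ≤ d a b) {c : ℝ} (hcost : ∑ p : V × V, A p * d p.1 p.2 = c)
    (hgap : ∑ v, f v * m₁ v - ∑ v, f v * m₂ v = c) : W d m₁ m₂ = c := by
  have hlb : c ∈ lowerBounds {c | ∃ A, IsCoupling A m₁ m₂ ∧ c = ∑ p : V × V, A p * d p.1 p.2} := by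
    rintro _ ⟨B, hB, rfl⟩
    exact hgap ▸ hB.sum_potential_sub_le_cost hf
  exact le_antisymm (csInf_le ⟨c, hlb⟩ ⟨A, hA, hcost.symm⟩) (le_csInf ⟨c, A, hA, hcost.symm⟩ hlb)

end Transport

lemma dist_top_real {V : Type*} [DecidableEq V] (a b : V) :
    ((⊤ : SimpleGraph V).dist a b : ℝ) = if a = b then 0 else 1 := by
  rw [SimpleGraph.dist_top]; split_ifs <;> simp

section CompleteGraph

variable {V : Type*} [Fintype V] [DecidableEq V] [DecidableRel (⊤ : SimpleGraph V).Adj]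

lemma lazyWalk_top (α : ℝ) (x v : V) :
    lazyWalk ⊤ α x v = if v = x then α else (1 - α) / ((Fintype.card V : ℝ) - 1) := by
  have hcard : 1 ≤ Fintype.card V := Fintype.card_pos_iff.2 ⟨x⟩
  have hdeg : ((⊤ : SimpleGraph V).degree x : ℝ) = Fintype.card V - 1 := by
    rw [show (⊤ : SimpleGraph V).degree x = Fintype.card V - 1 by
      convert SimpleGraph.complete_graph_degree x, Nat.cast_sub hcard, Nat.cast_one]
  unfold lazyWalk
  split_ifs <;> simp_all [eq_comm]

lemma W_lazyWalk_top {α : ℝ} (hα : 1 / (Fintype.card V : ℝ) ≤ α) (hα₁ : α ≤ 1) {x y : V}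
    (hxy : x ≠ y) :
    W (fun a b => ((⊤ : SimpleGraph V).dist a b : ℝ)) (lazyWalk ⊤ α x) (lazyWalk ⊤ α y)
      = α - (1 - α) / ((Fintype.card V : ℝ) - 1) := by
  set b := (1 - α) / ((Fintype.card V : ℝ) - 1)
  have hn : (2 : ℝ) ≤ Fintype.card V := by
    exact_mod_cast (Fintype.one_lt_card_iff.2 ⟨x, y, hxy⟩ : 2 ≤ Fintype.card V)
  have hb : 0 ≤ b := div_nonneg (by linarith) (by linarith)
  have hαb : 0 ≤ α - b := by
    rw [sub_nonneg, div_le_iff₀ (by linarith)]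
    rw [div_le_iff₀ (by linarith)] at hα
    linarith
  set A : V × V → ℝ := fun p => (if p.1 = p.2 then b else 0) + if p = (x, y) then α - b else 0
  have hA : IsCoupling A (lazyWalk ⊤ α x) (lazyWalk ⊤ α y) := by
    refine ⟨fun p => ?_, fun v => ?_, fun v => ?_⟩
    · positivity
    · by_cases hv : v = x <;> simp [A, b, sum_add_distrib, lazyWalk_top, hv]
    · by_cases hv : v = y <;> simp [A, b, sum_add_distrib, lazyWalk_top, hv]
  set f : V → ℝ := fun v => if v = x then 1 else 0
  refine W_eq_of_coupling_of_potential hA (f := f) (fun a c => ?_) ?_ ?_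
  · simp only [f, dist_top_real]
    split_ifs <;> simp_all
  · rw [Fintype.sum_eq_single (x, y) fun p hp => ?_]
    · simp [A, dist_top_real, hxy]
    · by_cases h : p.1 = p.2 <;> simp [A, dist_top_real, h, hp]
  · simp only [f, ite_mul, one_mul, zero_mul, sum_ite_eq', mem_univ, if_true, lazyWalk_top,
      if_neg hxy]
    rfl

lemma kappaAlpha_top {α : ℝ} (hα : 1 / (Fintype.card V : ℝ) ≤ α) (hα₁ : α ≤ 1) {x y : V}
    (hxy : x ≠ y) :
    kappaAlpha ⊤ α x y = (1 - α) * (Fintype.card V / ((Fintype.card V : ℝ) - 1)) := by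
  have hn : (Fintype.card V : ℝ) - 1 ≠ 0 := by
    rw [sub_ne_zero]; exact_mod_cast (Fintype.one_lt_card_iff.2 ⟨x, y, hxy⟩).ne'
  rw [kappaAlpha, W_lazyWalk_top hα hα₁ hxy, SimpleGraph.dist_top_of_ne hxy]
  field_simp
  ring

end CompleteGraph

lemma kappaLLY_eq_of_eventuallyEq {V : Type*} [Fintype V] [DecidableEq V] {G : SimpleGraph V}
    [DecidableRel G.Adj] {x y : V} {c : ℝ}
    (h : ∀ᶠ α in 𝓝[<] 1, kappaAlpha G α x y / (1 - α) = c) : kappaLLY G x y = c := by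
  rw [kappaLLY, nhdsWithin_Ico_eq_nhdsLT zero_lt_one]
  exact (tendsto_const_nhds.congr' (h.mono fun _ => Eq.symm)).limUnder_eq

theorem stmt_16_general (m : ℕ) (x y : Fin m) (hxy : x ≠ y)
    [DecidableRel (⊤ : SimpleGraph (Fin m)).Adj] :
    kappaLLY (⊤ : SimpleGraph (Fin m)) x y = (m : ℝ) / ((m : ℝ) - 1) := by
  have hm : (1 : ℝ) < m := by
    exact_mod_cast (Fintype.card_fin m) ▸ Fintype.one_lt_card_iff.2 ⟨x, y, hxy⟩
  apply kappaLLY_eq_of_eventuallyEq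
  filter_upwards [Ioo_mem_nhdsLT ((div_lt_one (by linarith)).2 hm)] with α hα
  rw [kappaAlpha_top (by simpa using hα.1.le) hα.2.le hxy, Fintype.card_fin,
    mul_div_cancel_left₀ _ (sub_ne_zero.2 hα.2.ne')]

/-- On the complete graph `K_m` (`m ≥ 2`), every edge has Lin–Lu–Yau curvature `m/(m-1)`. -/
theorem stmt_16 (m : ℕ) (hm : 2 ≤ m) (x y : Fin m) (hxy : x ≠ y)
    [DecidableRel (⊤ : SimpleGraph (Fin m)).Adj] :
    kappaLLY (⊤ : SimpleGraph (Fin m)) x y = (m : ℝ) / ((m : ℝ) - 1) :=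
  stmt_16_general m x y hxy
end
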